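/- Let H ⊆ D be a set of transactions with |H| ≥ 3, let Q = ⋂_{τ∈H} τ be nonempty, and let R = (⋃_{τ∈H} τ) \ Q. Suppose every item of R belongs to exactly one transaction of H. Then for every subset E ⊆ R with |E| = k, the pattern I = Q ∪ E satisfies H ⊆ Cov^k(I,D), i.e., every transaction of H lies in the k-cover of Q ∪ E; moreover distinct subsets E ≠ E' yield distinct patterns Q ∪ E ≠ Q ∪ E'. Consequently there are at least C(|R|, k) distinct patterns of the form Q ∪ E whose k-cover contains H. -/
import Mathlib


/-- The `k`-cover of an itemset `I` in `D`. -/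
def Covk {α : Type*} [DecidableEq α] (D : Finset (Finset α)) (I : Finset α) (k : ℕ) :
    Finset (Finset α) :=
  D.filter (fun τ => (τ ∩ I).Nonempty ∧ (I \ τ).card ≤ k)

theorem kcover_sharing_patterns {α : Type*} [DecidableEq α]
    (D : Finset (Finset α)) (H : Finset (Finset α)) (k : ℕ)
    (hHD : H ⊆ D) (hH3 : 3 ≤ H.card) (hHne : H.Nonempty)
    (Q R : Finset α)
    (hQ : Q = H.inf' hHne id) (hQne : Q.Nonempty)
    (hR : R = H.sup id \ Q)
    (hunique : ∀ r ∈ R, (H.filter (fun τ => r ∈ τ)).card = 1)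
    (hk : k ≤ R.card) :
    (∀ E ⊆ R, E.card = k → ∀ τ ∈ H, τ ∈ Covk D (Q ∪ E) k) ∧
    (∀ E ⊆ R, ∀ E' ⊆ R, E.card = k → E'.card = k → E ≠ E' → Q ∪ E ≠ Q ∪ E') ∧
    R.card.choose k ≤ ((R.powersetCard k).image (fun E => Q ∪ E)).card := by
  have hQsub : ∀ τ ∈ H, Q ⊆ τ := by
    intro τ hτ
    rw [hQ]
    exact Finset.inf'_le id hτ
  have hdisj : ∀ E ⊆ R, (Q ∪ E) \ Q = E := by
    intro E hE
    apply Finset.Subset.antisymm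
    · intro x hx
      simp only [Finset.mem_sdiff, Finset.mem_union] at hx
      tauto
    · intro x hx
      simp only [Finset.mem_sdiff, Finset.mem_union]
      have : x ∈ R := hE hx
      rw [hR] at this
      simp only [Finset.mem_sdiff] at this
      exact ⟨Or.inr hx, this.2⟩
  have hinj : ∀ E ⊆ R, ∀ E' ⊆ R, E ≠ E' → Q ∪ E ≠ Q ∪ E' := by
    intro E hE E' hE' hne heq
    apply hne
    rw [← hdisj E hE, ← hdisj E' hE', heq]
  refine ⟨?_, fun E hE E' hE' _ _ => hinj E hE E' hE', ?_⟩
  · intro E hE hEcard τ hτ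
    have hQτ := hQsub τ hτ
    refine Finset.mem_filter.mpr ⟨hHD hτ, ?_, ?_⟩
    · obtain ⟨q, hq⟩ := hQne
      exact ⟨q, Finset.mem_inter.mpr ⟨hQτ hq, Finset.mem_union_left _ hq⟩⟩
    · calc ((Q ∪ E) \ τ).card ≤ E.card := by
            apply Finset.card_le_card
            intro x hx
            simp only [Finset.mem_sdiff, Finset.mem_union] at hx
            rcases hx.1 with h | h
            · exact absurd (hQτ h) hx.2
            · exact h
          _ = k := hEcard
  · rw [← Finset.card_powersetCard k R]
    apply le_of_eq
    symm
    apply Finset.card_image_of_injOn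
    intro E hE E' hE' heq
    rw [Finset.mem_coe, Finset.mem_powersetCard] at hE hE'
    by_contra hne
    exact hinj E hE.1 E' hE'.1 hne heq
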